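/- For a Galton–Watson process (Xₙ) with X₀ = 1 and mean μ ∈ (0,1], for every δ > 0 one has lim_{n→∞} e^{δn} μ^{-n} P(Xₙ ≥ 1) = ∞. -/

import Mathlib

/-!
The survival probability is `1 - f^[n] 0`, where `f s = 𝔼[s ^ ξ]` is the offspring generating
function: `X n` is independent of the offspring variables of generation `n`, so
`𝔼[s ^ X (n + 1)] = 𝔼[f s ^ X n]`. Write `1 - f s = (1 - s) φ s` with
`φ s = 𝔼[1 + s + ⋯ + s ^ (ξ - 1)]`; `φ` is nondecreasing and tends to `μ` as `s → 1` by monotone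
convergence. So for any `ρ < μ`, once the iterates `f^[n] 0` are close enough to `1` every further
iteration multiplies `1 - f^[n] 0` by at least `ρ`, which gives `P(Xₙ ≥ 1) ≥ c ρ ^ n` with `c > 0`.
Taking `ρ = μ e^{-δ/2}` leaves the factor `c e^{δn/2} → ∞`.
-/

open Filter MeasureTheory ProbabilityTheory Finset Topology
open scoped ENNReal

lemma measurable_apply_nat {Ω β : Type*} {m : MeasurableSpace Ω} [MeasurableSpace β]
    {N : Ω → ℕ} {g : ℕ → Ω → β} (hN : Measurable N) (hg : ∀ k, Measurable (g k)) :
    Measurable fun ω => g (N ω) ω :=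
  (measurable_from_prod_countable_left (f := fun p : Ω × ℕ => g p.2 p.1) hg).comp
    (measurable_id.prodMk hN)

lemma ENNReal.pow_add_tsub_mul_geom_sum {s : ℝ≥0∞} (hs : s ≤ 1) (k : ℕ) :
    s ^ k + (1 - s) * ∑ j ∈ range k, s ^ j = 1 := by
  induction k with
  | zero => simp
  | succ k ih =>
    calc s ^ (k + 1) + (1 - s) * ∑ j ∈ range (k + 1), s ^ j
        = s ^ k * (s + (1 - s)) + (1 - s) * ∑ j ∈ range k, s ^ j := by
          rw [sum_range_succ]; ring
      _ = 1 := by rw [add_tsub_cancel_of_le hs, mul_one, ih]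

section

variable {Ω : Type*}

lemma lintegral_apply_nat_eq_tsum {mΩ : MeasurableSpace Ω} {P : Measure Ω} {N : Ω → ℕ}
    {g : ℕ → Ω → ℝ≥0∞} (hN : Measurable N) (hg : ∀ k, Measurable (g k)) :
    ∫⁻ ω, g (N ω) ω ∂P = ∑' k, ∫⁻ ω, (N ⁻¹' {k}).indicator 1 ω * g k ω ∂P := by
  rw [← lintegral_tsum (f := fun k ω => (N ⁻¹' {k}).indicator 1 ω * g k ω) fun k =>
    ((measurable_one.indicator (hN (measurableSet_singleton k))).mul (hg k)).aemeasurable]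
  congr with ω
  rw [tsum_eq_single (N ω) fun k hk => by simp [Ne.symm hk]]
  simp

theorem lintegral_apply_nat_of_indep {m₁ m₂ mΩ : MeasurableSpace Ω} {P : Measure Ω}
    (h₁ : m₁ ≤ mΩ) (h₂ : m₂ ≤ mΩ) (hind : Indep m₁ m₂ P) {N : Ω → ℕ} (hN : Measurable[m₁] N)
    {g : ℕ → Ω → ℝ≥0∞} (hg : ∀ k, Measurable[m₂] (g k)) :
    ∫⁻ ω, g (N ω) ω ∂P = ∫⁻ ω, ∫⁻ ω', g (N ω) ω' ∂P ∂P := by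
  have hN' : Measurable N := hN.mono h₁ le_rfl
  rw [lintegral_apply_nat_eq_tsum hN' fun k => (hg k).mono h₂ le_rfl,
    lintegral_apply_nat_eq_tsum (g := fun k _ => ∫⁻ ω', g k ω' ∂P) hN' fun k => measurable_const]
  congr with k
  rw [lintegral_mul_const _ (measurable_one.indicator (hN' (measurableSet_singleton k)))]
  exact lintegral_mul_eq_lintegral_mul_lintegral_of_independent_measurableSpace h₁ h₂ hind
    (measurable_const.indicator (hN (measurableSet_singleton k))) (hg k)

variable {mΩ : MeasurableSpace Ω} {P : Measure Ω}

noncomputable def pgf (P : Measure Ω) (Y : Ω → ℕ) (s : ℝ≥0∞) : ℝ≥0∞ := ∫⁻ ω, s ^ Y ω ∂P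

/-- `𝔼[1 + s + ⋯ + s ^ (Y - 1)]`, which is `(1 - pgf P Y s) / (1 - s)` for `s < 1`. -/
noncomputable def pgfSlope (P : Measure Ω) (Y : Ω → ℕ) (s : ℝ≥0∞) : ℝ≥0∞ :=
  ∫⁻ ω, ∑ j ∈ range (Y ω), s ^ j ∂P

section Pgf

variable {Y : Ω → ℕ}

lemma monotone_pgf : Monotone (pgf P Y) := fun _ _ hst => lintegral_mono fun _ => by gcongr

lemma monotone_pgfSlope : Monotone (pgfSlope P Y) := fun _ _ hst =>
  lintegral_mono fun _ => by gcongr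

lemma pgfSlope_zero_ne_zero (hY : Measurable Y) (h : ∫⁻ ω, (Y ω : ℝ≥0∞) ∂P ≠ 0) :
    pgfSlope P Y 0 ≠ 0 := by
  contrapose! h
  rw [pgfSlope, lintegral_eq_zero_iff (by fun_prop)] at h
  refine (lintegral_congr_ae ?_).trans lintegral_zero
  filter_upwards [h] with ω hω
  cases hk : Y ω with
  | zero => simp
  | succ k => simp [hk, sum_range_succ'] at hω

lemma exists_lt_pgfSlope (hY : Measurable Y) {ρ : ℝ≥0∞} (hρ : ρ < ∫⁻ ω, (Y ω : ℝ≥0∞) ∂P) :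
    ∃ s < 1, ρ < pgfSlope P Y s := by
  obtain ⟨u, hu_mono, hu_mem, hu_lim⟩ := exists_seq_strictMono_tendsto' (zero_lt_one' ℝ≥0∞)
  have hlim : Tendsto (fun n => pgfSlope P Y (u n)) atTop (𝓝 (∫⁻ ω, (Y ω : ℝ≥0∞) ∂P)) := by
    refine lintegral_tendsto_of_tendsto_of_monotone (fun n => by fun_prop)
      (ae_of_all _ fun ω n m hnm => ?_) (ae_of_all _ fun ω => ?_)
    · exact sum_le_sum fun j _ => pow_le_pow_left' (hu_mono.monotone hnm) j
    · simpa [Function.comp_def] using ((continuous_finsetSum (range (Y ω)) fun j _ =>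
        ENNReal.continuous_pow j).tendsto 1).comp hu_lim
  obtain ⟨n, hn⟩ := (hlim.eventually (eventually_gt_nhds hρ)).exists
  exact ⟨u n, (hu_mem n).2, hn⟩

variable [IsProbabilityMeasure P]

lemma pgf_add_tsub_mul_pgfSlope (hY : Measurable Y) {s : ℝ≥0∞} (hs : s ≤ 1) :
    pgf P Y s + (1 - s) * pgfSlope P Y s = 1 := by
  rw [pgf, pgfSlope, ← lintegral_const_mul _ (by fun_prop), ← lintegral_add_left (by fun_prop)]
  simp [ENNReal.pow_add_tsub_mul_geom_sum hs]

lemma pgf_le_one (hY : Measurable Y) {s : ℝ≥0∞} (hs : s ≤ 1) : pgf P Y s ≤ 1 :=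
  le_self_add.trans_eq (pgf_add_tsub_mul_pgfSlope hY hs)

lemma one_sub_pgf (hY : Measurable Y) {s : ℝ≥0∞} (hs : s ≤ 1) :
    1 - pgf P Y s = (1 - s) * pgfSlope P Y s :=
  ENNReal.sub_eq_of_eq_add_rev ((pgf_le_one hY hs).trans_lt ENNReal.one_lt_top).ne
    (pgf_add_tsub_mul_pgfSlope hY hs).symm

theorem exists_mul_pow_le_one_sub_pgf_iterate (hY : Measurable Y) {ρ : ℝ≥0∞}
    (hρ : ρ < ∫⁻ ω, (Y ω : ℝ≥0∞) ∂P) (hρ1 : ρ ≤ 1) :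
    ∃ c ≠ 0, c ≤ 1 ∧ ∀ n, c * ρ ^ n ≤ 1 - (pgf P Y)^[n] 0 := by
  set q : ℕ → ℝ≥0∞ := fun n => (pgf P Y)^[n] 0
  have hq_mono : Monotone q := monotone_pgf.monotone_iterate_of_le_map zero_le
  have hq_le : ∀ n, q n ≤ 1 := by
    intro n
    induction n with
    | zero => exact zero_le_one
    | succ n ih => simpa only [q, Function.iterate_succ_apply'] using pgf_le_one hY ih
  have hq_succ : ∀ n, 1 - q (n + 1) = (1 - q n) * pgfSlope P Y (q n) := fun n => by
    simp only [q, Function.iterate_succ_apply', one_sub_pgf hY (hq_le n)]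
  obtain ⟨s, hs1, hρs⟩ := exists_lt_pgfSlope hY hρ
  -- Either the iterates reach `s`, after which each step gains a factor `ρ`, or they stay below it.
  by_cases h : ∃ N, s ≤ q N
  · obtain ⟨N, hN⟩ := h
    have hpos : ∀ n, 1 - q n ≠ 0 := by
      intro n
      induction n with
      | zero => simp [q]
      | succ n ih =>
        rw [hq_succ]
        exact mul_ne_zero ih (ne_bot_of_le_ne_bot
          (pgfSlope_zero_ne_zero hY ((zero_le (a := ρ)).trans_lt hρ).ne')
          (monotone_pgfSlope zero_le))
    refine ⟨1 - q N, hpos N, tsub_le_self, fun n => ?_⟩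
    induction n with
    | zero => simp
    | succ n ih =>
      rcases lt_or_ge n N with hn | hn
      · calc (1 - q N) * ρ ^ (n + 1) ≤ 1 - q N := mul_le_of_le_one_right' (pow_le_one' hρ1 _)
          _ ≤ 1 - q (n + 1) := tsub_le_tsub_left (hq_mono hn) 1
      · calc (1 - q N) * ρ ^ (n + 1) = (1 - q N) * ρ ^ n * ρ := by ring
          _ ≤ (1 - q n) * pgfSlope P Y (q n) := by
            gcongr
            exact hρs.le.trans (monotone_pgfSlope (hN.trans (hq_mono hn)))
          _ = 1 - q (n + 1) := (hq_succ n).symm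
  · push Not at h
    refine ⟨1 - s, (tsub_pos_of_lt hs1).ne', tsub_le_self, fun n => ?_⟩
    calc (1 - s) * ρ ^ n ≤ 1 - s := mul_le_of_le_one_right' (pow_le_one' hρ1 n)
      _ ≤ 1 - q n := tsub_le_tsub_left (h n).le 1

end Pgf

structure IsGaltonWatson (P : Measure Ω) (ξ : ℕ → ℕ → Ω → ℕ) (X : ℕ → Ω → ℕ) : Prop where
  measurable_offspring : ∀ n i, Measurable (ξ n i)
  iIndepFun_offspring : iIndepFun (fun p : ℕ × ℕ => ξ p.1 p.2) P
  identDistrib_offspring : ∀ n i, IdentDistrib (ξ n i) (ξ 0 0) P P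
  zero : ∀ ω, X 0 ω = 1
  succ : ∀ n ω, X (n + 1) ω = ∑ i ∈ range (X n ω), ξ n i ω

namespace IsGaltonWatson

variable {ξ : ℕ → ℕ → Ω → ℕ} {X : ℕ → Ω → ℕ}

lemma isProbabilityMeasure (hGW : IsGaltonWatson P ξ X) : IsProbabilityMeasure P :=
  hGW.iIndepFun_offspring.isProbabilityMeasure

lemma comap_offspring_le (hGW : IsGaltonWatson P ξ X) (p : ℕ × ℕ) :
    MeasurableSpace.comap (ξ p.1 p.2) inferInstance ≤ mΩ :=
  (hGW.measurable_offspring p.1 p.2).comap_le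

theorem measurable_generation (hGW : IsGaltonWatson P ξ X) (n : ℕ) :
    Measurable[⨆ p ∈ {p : ℕ × ℕ | p.1 < n}, MeasurableSpace.comap (ξ p.1 p.2) inferInstance]
      (X n) := by
  induction n with
  | zero => simpa only [funext hGW.zero] using measurable_const
  | succ n ih =>
    rw [show X (n + 1) = fun ω => (fun k ω => ∑ i ∈ range k, ξ n i ω) (X n ω) ω from
      funext (hGW.succ n)]
    refine measurable_apply_nat (ih.mono (biSup_mono fun p hp => Nat.lt_succ_of_lt hp) le_rfl)
      fun k => Finset.measurable_sum _ fun i _ => Measurable.of_comap_le ?_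
    exact le_biSup (fun p : ℕ × ℕ => MeasurableSpace.comap (ξ p.1 p.2) inferInstance)
      (show (n, i) ∈ {p : ℕ × ℕ | p.1 < n + 1} from n.lt_succ_self)

lemma measurable (hGW : IsGaltonWatson P ξ X) (n : ℕ) : Measurable (X n) :=
  (hGW.measurable_generation n).mono (iSup₂_le fun p _ => hGW.comap_offspring_le p) le_rfl

theorem lintegral_pow_succ (hGW : IsGaltonWatson P ξ X) (n : ℕ) (s : ℝ≥0∞) :
    ∫⁻ ω, s ^ X (n + 1) ω ∂P = ∫⁻ ω, pgf P (ξ 0 0) s ^ X n ω ∂P := by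
  set m : ℕ × ℕ → MeasurableSpace Ω := fun p => MeasurableSpace.comap (ξ p.1 p.2) inferInstance
  have hind : Indep (⨆ p ∈ {p : ℕ × ℕ | p.1 < n}, m p) (⨆ p ∈ {p : ℕ × ℕ | p.1 = n}, m p) P :=
    indep_iSup_of_disjoint hGW.comap_offspring_le hGW.iIndepFun_offspring.iIndep
      (Set.disjoint_left.2 fun p hlt heq => (Set.mem_ofPred.1 hlt).ne (Set.mem_ofPred.1 heq))
  have hprod : ∀ k, ∫⁻ ω, ∏ i ∈ range k, s ^ ξ n i ω ∂P = pgf P (ξ 0 0) s ^ k := by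
    intro k
    have hindep : iIndepFun (fun i ω => s ^ ξ n i ω) P :=
      (hGW.iIndepFun_offspring.precomp (g := fun i => (n, i)) fun _ _ h => (Prod.mk.inj h).2).comp
        _ fun _ => measurable_from_top
    rw [lintegral_prod_eq_prod_lintegral_of_indepFun _ _ hindep
      fun i => measurable_from_top.comp (hGW.measurable_offspring n i)]
    exact (prod_congr rfl fun i _ => ((hGW.identDistrib_offspring n i).comp
      (measurable_from_top (f := fun k : ℕ => s ^ k))).lintegral_eq).trans (by simp [pgf])
  calc ∫⁻ ω, s ^ X (n + 1) ω ∂P = ∫⁻ ω, ∏ i ∈ range (X n ω), s ^ ξ n i ω ∂P := by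
        simp_rw [hGW.succ, prod_pow_eq_pow_sum]
    _ = ∫⁻ ω, ∫⁻ ω', ∏ i ∈ range (X n ω), s ^ ξ n i ω' ∂P ∂P :=
        lintegral_apply_nat_of_indep (iSup₂_le fun p _ => hGW.comap_offspring_le p)
          (iSup₂_le fun p _ => hGW.comap_offspring_le p) hind (hGW.measurable_generation n)
          fun k => Finset.measurable_prod _ fun i _ => measurable_from_top.comp
            (Measurable.of_comap_le (le_biSup m (show (n, i) ∈ {p : ℕ × ℕ | p.1 = n} from rfl)))
    _ = _ := by simp_rw [hprod]

theorem lintegral_pow_eq_pgf_iterate (hGW : IsGaltonWatson P ξ X) (n : ℕ) (s : ℝ≥0∞) :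
    ∫⁻ ω, s ^ X n ω ∂P = (pgf P (ξ 0 0))^[n] s := by
  have := hGW.isProbabilityMeasure
  induction n generalizing s with
  | zero => simp [hGW.zero]
  | succ n ih => rw [hGW.lintegral_pow_succ, ih, Function.iterate_succ_apply]

theorem measure_one_le_eq_one_sub_pgf_iterate (hGW : IsGaltonWatson P ξ X) (n : ℕ) :
    P {ω | 1 ≤ X n ω} = 1 - (pgf P (ξ 0 0))^[n] 0 := by
  have := hGW.isProbabilityMeasure
  have hmeas : MeasurableSet {ω | X n ω = 0} := hGW.measurable n (measurableSet_singleton 0)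
  have hzero : ∫⁻ ω, 0 ^ X n ω ∂P = P {ω | X n ω = 0} := by
    rw [← lintegral_indicator_one hmeas]
    congr with ω
    by_cases h : X n ω = 0 <;> simp [h]
  rw [← hGW.lintegral_pow_eq_pgf_iterate n 0, hzero, ← prob_compl_eq_one_sub hmeas]
  congr with ω
  simp [Nat.one_le_iff_ne_zero]

theorem exists_mul_pow_le_survival (hGW : IsGaltonWatson P ξ X)
    (hint : Integrable (fun ω => (ξ 0 0 ω : ℝ)) P) {ρ : ℝ} (hρ0 : 0 ≤ ρ)
    (hρμ : ρ < ∫ ω, (ξ 0 0 ω : ℝ) ∂P) (hρ1 : ρ ≤ 1) :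
    ∃ c > 0, ∀ n, c * ρ ^ n ≤ (P {ω | 1 ≤ X n ω}).toReal := by
  have := hGW.isProbabilityMeasure
  have hmean : ENNReal.ofReal (∫ ω, (ξ 0 0 ω : ℝ) ∂P) = ∫⁻ ω, (ξ 0 0 ω : ℝ≥0∞) ∂P := by
    simp [ofReal_integral_eq_lintegral_ofReal hint (ae_of_all _ fun ω => Nat.cast_nonneg _)]
  obtain ⟨c, hc0, hc1, hc⟩ := exists_mul_pow_le_one_sub_pgf_iterate
    (hGW.measurable_offspring 0 0) (hmean ▸ (ENNReal.ofReal_lt_ofReal_iff_of_nonneg hρ0).2 hρμ)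
    (ENNReal.ofReal_le_one.2 hρ1)
  refine ⟨c.toReal, ENNReal.toReal_pos hc0 (ne_top_of_le_ne_top ENNReal.one_ne_top hc1),
    fun n => ?_⟩
  rw [hGW.measure_one_le_eq_one_sub_pgf_iterate]
  calc c.toReal * ρ ^ n = (c * ENNReal.ofReal ρ ^ n).toReal := by
        simp [ENNReal.toReal_mul, ENNReal.toReal_pow, ENNReal.toReal_ofReal hρ0]
    _ ≤ _ := ENNReal.toReal_mono (by simp) (hc n)

end IsGaltonWatson

end

theorem gw_survival_probability_subexponential_general {Ω : Type*} [MeasureSpace Ω]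
    (ξ : ℕ → ℕ → Ω → ℕ) (hξm : ∀ n i, Measurable (ξ n i))
    (hindep : iIndepFun (fun p : ℕ × ℕ => ξ p.1 p.2) ℙ)
    (hident : ∀ n i, IdentDistrib (ξ n i) (ξ 0 0) ℙ ℙ)
    (X : ℕ → Ω → ℕ)
    (hX0 : ∀ ω, X 0 ω = 1)
    (hXrec : ∀ n ω, X (n + 1) ω = ∑ i ∈ Finset.range (X n ω), ξ n i ω)
    (hintξ : Integrable (fun ω => (ξ 0 0 ω : ℝ)) ℙ)
    (μ : ℝ) (hμ : μ = ∫ ω, (ξ 0 0 ω : ℝ)) (hμmem : μ ∈ Set.Ioc (0 : ℝ) 1) :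
    ∀ δ > (0 : ℝ),
      Tendsto (fun n : ℕ =>
          Real.exp (δ * n) * μ⁻¹ ^ n * (ℙ {ω | 1 ≤ X n ω}).toReal)
        atTop atTop := by
  intro δ hδ
  obtain ⟨hμ0, hμ1⟩ := hμmem
  have hρμ : μ * Real.exp (-(δ / 2)) < μ :=
    mul_lt_of_lt_one_right hμ0 (Real.exp_lt_one_iff.2 (by linarith))
  obtain ⟨c, hc, hbound⟩ := IsGaltonWatson.exists_mul_pow_le_survival
    ⟨hξm, hindep, hident, hX0, hXrec⟩ hintξ (by positivity) (hμ ▸ hρμ) (hρμ.le.trans hμ1)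
  refine tendsto_atTop_mono (fun n => ?_) ((Real.tendsto_exp_atTop.comp
    (tendsto_natCast_atTop_atTop.const_mul_atTop (half_pos hδ))).const_mul_atTop hc)
  calc c * Real.exp (δ / 2 * n)
      = Real.exp (δ * n) * μ⁻¹ ^ n * (c * (μ * Real.exp (-(δ / 2))) ^ n) := by
        rw [mul_pow, ← Real.exp_nat_mul, inv_pow]
        field_simp
        rw [← Real.exp_add]
        ring_nf
    _ ≤ _ := by gcongr; exact hbound n

/-- Lemma 2.1: for a (sub)critical Galton–Watson process started from one particle,
`e^{δn} μ^{-n} P(Xₙ ≥ 1) → ∞`. The GW process is built from the i.i.d. offspring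
variables `ξ n i` via the standard recursion. -/
theorem gw_survival_probability_subexponential {Ω : Type*} [MeasureSpace Ω]
    [IsProbabilityMeasure (ℙ : Measure Ω)]
    (ξ : ℕ → ℕ → Ω → ℕ) (hξm : ∀ n i, Measurable (ξ n i))
    (hindep : iIndepFun (fun p : ℕ × ℕ => ξ p.1 p.2) ℙ)
    (hident : ∀ n i, IdentDistrib (ξ n i) (ξ 0 0) ℙ ℙ)
    (X : ℕ → Ω → ℕ)
    (hX0 : ∀ ω, X 0 ω = 1)
    (hXrec : ∀ n ω, X (n + 1) ω = ∑ i ∈ Finset.range (X n ω), ξ n i ω)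
    (hintξ : Integrable (fun ω => (ξ 0 0 ω : ℝ)) ℙ)
    (μ : ℝ) (hμ : μ = ∫ ω, (ξ 0 0 ω : ℝ)) (hμmem : μ ∈ Set.Ioc (0 : ℝ) 1) :
    ∀ δ > (0 : ℝ),
      Tendsto (fun n : ℕ =>
          Real.exp (δ * n) * μ⁻¹ ^ n * (ℙ {ω | 1 ≤ X n ω}).toReal)
        atTop atTop :=
  gw_survival_probability_subexponential_general ξ hξm hindep hident X hX0 hXrec hintξ μ hμ hμmem
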